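/- arXiv:1306.0033 — 3 statements merged into one kernel-verified Lean document; each statement's English description precedes it below -/
import Mathlib

section
/- Let F be a free group, let H be a finitely generated subgroup of F, and let f ∈ F with f ∉ H. Then there exists a subgroup M of F of finite index such that H ≤ M and f ∉ M. In particular, every finitely generated subgroup of a free group is closed in the profinite topology of F. -/
private lemma subtypeCongr_apply_pos {V : Type*} {p q : V → Prop} [DecidablePred p]
    [DecidablePred q] (e : {v // p v} ≃ {v // q v}) (e' : {v // ¬ p v} ≃ {v // ¬ q v})
    (v : V) (h : p v) : Equiv.subtypeCongr e e' v = ↑(e ⟨v, h⟩) := by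
  simp [Equiv.subtypeCongr, Equiv.sumCompl_symm_apply_of_pos h]

private lemma hall_free {α : Type*} (H : Subgroup (FreeGroup α)) (hH : H.FG)
    (f : FreeGroup α) (hf : f ∉ H) :
    ∃ M : Subgroup (FreeGroup α), M.FiniteIndex ∧ H ≤ M ∧ f ∉ M := by
  classical
  obtain ⟨S, hS⟩ := hH
  let G := FreeGroup α
  let Q := G ⧸ H
  let ρ : G → Q := QuotientGroup.mk
  let W : Set G := ⋃ s ∈ (↑S ∪ {f} : Set G), {g | ∃ t ∈ s.toWord.tails, FreeGroup.mk t = g}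
  have hWfin : W.Finite := by
    apply Set.Finite.biUnion (S.finite_toSet.union (Set.finite_singleton f))
    intro s _
    have h1 : {g | ∃ t ∈ s.toWord.tails, FreeGroup.mk t = g}
        = FreeGroup.mk '' {t | t ∈ s.toWord.tails} := by
      ext g; simp [Set.mem_image]
    rw [h1]
    exact (s.toWord.tails.finite_toSet).image _
  let V : Set Q := ρ '' W
  have hVfin : V.Finite := hWfin.image ρ
  haveI : Fintype V := hVfin.fintype
  have hmemW : ∀ s ∈ (↑S ∪ {f} : Set G), ∀ t ∈ s.toWord.tails, FreeGroup.mk t ∈ W :=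
    fun s hs t ht => Set.mem_biUnion hs ⟨t, ht, rfl⟩
  have h1W : (1 : G) ∈ W := by
    have := hmemW f (by simp) [] (by simp)
    simpa [← FreeGroup.one_eq_mk] using this
  have hptV : ρ 1 ∈ V := ⟨1, h1W, rfl⟩
  let pt : V := ⟨ρ 1, hptV⟩
  let p : α → V → Prop := fun x v => FreeGroup.of x • (v : Q) ∈ V
  let q : α → V → Prop := fun x v => (FreeGroup.of x)⁻¹ • (v : Q) ∈ V
  let e : ∀ x : α, {v : V // p x v} ≃ {v : V // q x v} := fun x =>
    { toFun := fun v => ⟨⟨FreeGroup.of x • (v.1 : Q), v.2⟩, by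
        show (FreeGroup.of x)⁻¹ • (FreeGroup.of x • (v.1 : Q)) ∈ V
        rw [inv_smul_smul]; exact v.1.2⟩
      invFun := fun v => ⟨⟨(FreeGroup.of x)⁻¹ • (v.1 : Q), v.2⟩, by
        show FreeGroup.of x • ((FreeGroup.of x)⁻¹ • (v.1 : Q)) ∈ V
        rw [smul_inv_smul]; exact v.1.2⟩
      left_inv := fun v => Subtype.ext (Subtype.ext (inv_smul_smul _ _))
      right_inv := fun v => Subtype.ext (Subtype.ext (smul_inv_smul _ _)) }
  let e' : ∀ x : α, {v : V // ¬ p x v} ≃ {v : V // ¬ q x v} := fun x =>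
    Fintype.equivOfCardEq (by
      have h := Fintype.card_congr (e x)
      rw [Fintype.card_subtype_compl, Fintype.card_subtype_compl, h])
  let σ : α → Equiv.Perm V := fun x => Equiv.subtypeCongr (e x) (e' x)
  have hσ : ∀ (x : α) (v : V) (h : p x v), σ x v = ⟨FreeGroup.of x • (v : Q), h⟩ :=
    fun x v h => subtypeCongr_apply_pos (e x) (e' x) v h
  let φ : G →* Equiv.Perm V := FreeGroup.lift σ
  have key : ∀ l : List (α × Bool), (∀ t ∈ l.tails, ρ (FreeGroup.mk t) ∈ V) →
      (↑(φ (FreeGroup.mk l) pt) : Q) = ρ (FreeGroup.mk l) := by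
    intro l
    induction l with
    | nil =>
      intro _
      show (↑(φ (FreeGroup.mk []) pt) : Q) = ρ (FreeGroup.mk [])
      rw [← FreeGroup.one_eq_mk, map_one]
      rfl
    | cons hd tl ih =>
      intro hl
      obtain ⟨x, b⟩ := hd
      have htl : ∀ t ∈ tl.tails, ρ (FreeGroup.mk t) ∈ V := fun t ht =>
        hl t (by rw [List.tails_cons]; exact List.mem_cons_of_mem _ ht)
      have hu : φ (FreeGroup.mk tl) pt = ⟨ρ (FreeGroup.mk tl), htl tl (by simp)⟩ :=
        Subtype.ext (ih htl)
      have hlV : ρ (FreeGroup.mk ((x, b) :: tl)) ∈ V := hl _ (by simp)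
      have hmk : FreeGroup.mk ((x, b) :: tl)
          = (cond b (FreeGroup.of x) (FreeGroup.of x)⁻¹) * FreeGroup.mk tl := by
        cases b <;> simp [FreeGroup.of, FreeGroup.inv_mk, FreeGroup.invRev, FreeGroup.mul_mk]
      cases b with
      | true =>
        have hp : p x ⟨ρ (FreeGroup.mk tl), htl tl (by simp)⟩ := by
          show FreeGroup.of x • ρ (FreeGroup.mk tl) ∈ V
          have : FreeGroup.of x • ρ (FreeGroup.mk tl) = ρ (FreeGroup.mk ((x, true) :: tl)) := by
            rw [hmk]; rfl
          rw [this]; exact hlV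
        have : φ (FreeGroup.mk ((x, true) :: tl)) pt
            = σ x (φ (FreeGroup.mk tl) pt) := by
          rw [hmk]
          show (φ (FreeGroup.of x * FreeGroup.mk tl)) pt = _
          rw [map_mul]
          show φ (FreeGroup.of x) (φ (FreeGroup.mk tl) pt) = _
          rw [show φ (FreeGroup.of x) = σ x from FreeGroup.lift_apply_of]
        rw [this, hu, hσ x _ hp]
        show FreeGroup.of x • ρ (FreeGroup.mk tl) = ρ (FreeGroup.mk ((x, true) :: tl))
        rw [hmk]; rfl
      | false =>
        have hq : p x ⟨ρ (FreeGroup.mk ((x, false) :: tl)), hlV⟩ := by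
          show FreeGroup.of x • ρ (FreeGroup.mk ((x, false) :: tl)) ∈ V
          have : FreeGroup.of x • ρ (FreeGroup.mk ((x, false) :: tl))
              = ρ (FreeGroup.mk tl) := by
            rw [hmk]
            show ρ (FreeGroup.of x * ((FreeGroup.of x)⁻¹ * FreeGroup.mk tl)) = _
            rw [← mul_assoc, mul_inv_cancel, one_mul]
          rw [this]; exact htl tl (by simp)
        have hw : σ x ⟨ρ (FreeGroup.mk ((x, false) :: tl)), hlV⟩
            = φ (FreeGroup.mk tl) pt := by
          rw [hσ x _ hq, hu]
          apply Subtype.ext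
          show FreeGroup.of x • ρ (FreeGroup.mk ((x, false) :: tl)) = ρ (FreeGroup.mk tl)
          rw [hmk]
          show ρ (FreeGroup.of x * ((FreeGroup.of x)⁻¹ * FreeGroup.mk tl)) = _
          rw [← mul_assoc, mul_inv_cancel, one_mul]
        have : φ (FreeGroup.mk ((x, false) :: tl)) pt
            = (σ x)⁻¹ (φ (FreeGroup.mk tl) pt) := by
          rw [hmk]
          show (φ ((FreeGroup.of x)⁻¹ * FreeGroup.mk tl)) pt = _
          rw [map_mul, map_inv]
          show (φ (FreeGroup.of x))⁻¹ (φ (FreeGroup.mk tl) pt) = _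
          rw [show φ (FreeGroup.of x) = σ x from FreeGroup.lift_apply_of]
        rw [this, ← hw, Equiv.Perm.inv_def, Equiv.symm_apply_apply]
  have keyg : ∀ g ∈ (↑S ∪ {f} : Set G), (↑(φ g pt) : Q) = ρ g := by
    intro g hg
    have hl : ∀ t ∈ g.toWord.tails, ρ (FreeGroup.mk t) ∈ V := fun t ht =>
      ⟨FreeGroup.mk t, hmemW g hg t ht, rfl⟩
    have := key g.toWord hl
    rwa [FreeGroup.mk_toWord] at this
  let M : Subgroup G := (MulAction.stabilizer (Equiv.Perm V) pt).comap φ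
  have hMmem : ∀ g : G, g ∈ M ↔ φ g pt = pt := by
    intro g
    rw [Subgroup.mem_comap, MulAction.mem_stabilizer_iff]
    rfl
  refine ⟨M, ?_, ?_, ?_⟩
  · refine ⟨?_⟩
    rw [Subgroup.index_comap]
    exact Subgroup.index_ne_zero_of_finite
  · rw [← hS, Subgroup.closure_le]
    intro s hs
    rw [SetLike.mem_coe, hMmem]
    apply Subtype.ext
    rw [keyg s (Or.inl hs)]
    show ρ s = ρ 1
    have hsH : s ∈ H := hS ▸ Subgroup.subset_closure hs
    rw [QuotientGroup.eq]
    simpa only [mul_one] using H.inv_mem hsH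
  · rw [hMmem]
    intro hfix
    have := keyg f (by simp)
    rw [hfix] at this
    have : ρ 1 = ρ f := this
    rw [QuotientGroup.eq] at this
    exact hf (by simpa using this)

private lemma hall_main {F : Type*} [Group F] [IsFreeGroup F] (H : Subgroup F) (hH : H.FG)
    (f : F) (hf : f ∉ H) : ∃ M : Subgroup F, M.FiniteIndex ∧ H ≤ M ∧ f ∉ M := by
  classical
  let e : F ≃* FreeGroup (IsFreeGroup.Generators F) := IsFreeGroup.toFreeGroup F
  have hH' : (H.map e.toMonoidHom).FG := by
    obtain ⟨T, hT⟩ := hH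
    exact ⟨T.image e, by
      rw [Finset.coe_image, show (⇑e : F → _) = ⇑e.toMonoidHom from rfl,
        ← MonoidHom.map_closure e.toMonoidHom, hT]⟩
  have hf' : e f ∉ H.map e.toMonoidHom := by
    intro h
    obtain ⟨g, hg, hge⟩ := h
    exact hf (by rwa [← e.injective hge])
  obtain ⟨M', hM'fi, hM'le, hM'f⟩ := hall_free (H.map e.toMonoidHom) hH' (e f) hf'
  refine ⟨M'.comap e.toMonoidHom, ?_, ?_, ?_⟩
  · refine ⟨?_⟩
    rw [Subgroup.index_comap_of_surjective _ e.surjective]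
    exact hM'fi.index_ne_zero
  · intro h hh
    exact Subgroup.mem_comap.mpr (hM'le ⟨h, hh, rfl⟩)
  · intro h
    exact hM'f (Subgroup.mem_comap.mp h)

/-- A subset `S` of a group `G` is closed in the profinite topology of `G`:
for every `f ∉ S` there exists a finite-index normal subgroup `N` of `G`
such that the coset `f * N` is disjoint from `S`. -/
def ProfinitelyClosed {G : Type*} [Group G] (S : Set G) : Prop :=
  ∀ f : G, f ∉ S → ∃ N : Subgroup G, N.Normal ∧ N.FiniteIndex ∧
    ∀ n ∈ N, f * n ∉ S

theorem marshall_hall_separability {F : Type*} [Group F] [IsFreeGroup F]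
    (H : Subgroup F) (hH : H.FG) (f : F) (hf : f ∉ H) :
    (∃ M : Subgroup F, M.FiniteIndex ∧ H ≤ M ∧ f ∉ M) ∧
      ProfinitelyClosed (H : Set F) := by
  constructor
  · exact hall_main H hH f hf
  · intro g hg
    obtain ⟨M, hMfi, hMle, hMg⟩ := hall_main H hH g (by simpa using hg)
    haveI := hMfi
    refine ⟨M.normalCore, M.normalCore_normal, inferInstance, ?_⟩
    intro n hn hgn
    have hnM : n ∈ M := M.normalCore_le hn
    have : g * n ∈ M := hMle (by simpa using hgn)
    exact hMg (by simpa using M.mul_mem this (M.inv_mem hnM))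
end

section
/- Let F be a free group that decomposes as a free product F = K * L (K is a free factor of F), let H be a finitely generated subgroup of F, and let f ∈ F with f ∉ HK. Then there exists a subgroup M of F of finite index such that H ≤ M and Mf ∩ HK = ∅; in particular f ∉ MK. -/
open Subgroup

lemma exists_perm_extend {C Q : Type*} (Y : Set C) (hYfin : Y.Finite) (t : C → C)
    (ht : Function.Injective t) (blk : C → Q) (hblk : ∀ y, blk (t y) = blk y) :
    ∃ π : Equiv.Perm Y, (∀ (y : Y) (h : t ↑y ∈ Y), π y = ⟨t ↑y, h⟩) ∧
      (∀ y : Y, blk ↑(π y) = blk ↑y) := by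
  classical
  haveI : Finite Y := hYfin.to_subtype
  set g : Y → Q := fun y => blk ↑y with hg
  have main : ∀ q : Q, ∃ πq : Equiv.Perm {y : Y // g y = q},
      ∀ (z : {y : Y // g y = q}) (h : t ↑↑z ∈ Y), ↑↑(πq z) = t ↑↑z := by
    intro q
    haveI : Finite {y : Y // g y = q} := Subtype.finite
    set p : {y : Y // g y = q} → Prop := fun z => t ↑↑z ∈ Y with hp
    set F : {z : {y : Y // g y = q} // p z} → {y : Y // g y = q} :=
      fun z => ⟨⟨t ↑↑↑z, z.2⟩, by
        show blk (t ↑↑↑z) = q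
        rw [hblk]; exact z.1.2⟩ with hF
    have hFinj : Function.Injective F := by
      intro a b hab
      apply Subtype.ext; apply Subtype.ext; apply Subtype.ext
      have := congrArg (fun z => (↑↑z : C)) hab
      exact ht this
    set e := Equiv.ofInjective F hFinj with he
    refine ⟨Equiv.extendSubtype e, ?_⟩
    intro z h
    rw [Equiv.extendSubtype_apply_of_mem e z h]
    rfl
  choose πq hπq using main
  refine ⟨((Equiv.sigmaFiberEquiv g).symm.trans
      (Equiv.sigmaCongrRight πq)).trans (Equiv.sigmaFiberEquiv g), ?_, ?_⟩
  · intro y h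
    apply Subtype.ext
    simp only [Equiv.trans_apply]
    have h1 : (Equiv.sigmaFiberEquiv g).symm y = ⟨g y, ⟨y, rfl⟩⟩ := by
      apply (Equiv.sigmaFiberEquiv g).injective
      simp [Equiv.sigmaFiberEquiv]
    rw [h1]
    show ↑↑(πq (g y) ⟨y, rfl⟩) = t ↑y
    exact hπq (g y) ⟨y, rfl⟩ h
  · intro y
    simp only [Equiv.trans_apply]
    have h1 : (Equiv.sigmaFiberEquiv g).symm y = ⟨g y, ⟨y, rfl⟩⟩ := by
      apply (Equiv.sigmaFiberEquiv g).injective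
      simp [Equiv.sigmaFiberEquiv]
    rw [h1]
    show blk ↑↑(πq (g y) ⟨y, rfl⟩) = blk ↑y
    exact (πq (g y) ⟨y, rfl⟩).2

lemma isFreeGroup_closure_range_of (G : Type*) [Group G] [IsFreeGroup G] :
    Subgroup.closure (Set.range (IsFreeGroup.of : IsFreeGroup.Generators G → G)) = ⊤ := by
  have h1 : Set.range (IsFreeGroup.of : IsFreeGroup.Generators G → G)
      = ⇑(IsFreeGroup.mulEquiv G).toMonoidHom '' Set.range (FreeGroup.of) := by
    rw [← Set.range_comp]; rfl
  rw [h1, ← MonoidHom.map_closure, FreeGroup.closure_range_of,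
    Subgroup.map_top_of_surjective _ (IsFreeGroup.mulEquiv G).surjective]

theorem fg_subgroup_times_free_factor_separated {F : Type*} [Group F] [IsFreeGroup F]
    (K L : Subgroup F)
    (hfree : Function.Bijective (Monoid.Coprod.lift K.subtype L.subtype))
    (H : Subgroup F) (hH : H.FG) (f : F)
    (hf : f ∉ {x : F | ∃ h ∈ H, ∃ k ∈ K, x = h * k}) :
    ∃ M : Subgroup F, M.FiniteIndex ∧ H ≤ M ∧
      (∀ m ∈ M, m * f ∉ {x : F | ∃ h ∈ H, ∃ k ∈ K, x = h * k}) ∧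
      f ∉ {x : F | ∃ m ∈ M, ∃ k ∈ K, x = m * k} := by
  classical
  obtain ⟨T, hT⟩ := hH
  set e : Monoid.Coprod ↥K ↥L ≃* F := MulEquiv.ofBijective _ hfree with he
  have hKL : K ⊔ L = ⊤ := by
    have h1 : (Monoid.Coprod.lift K.subtype L.subtype).range = ⊤ :=
      MonoidHom.range_eq_top.mpr hfree.surjective
    rwa [Monoid.Coprod.range_lift, Subgroup.range_subtype, Subgroup.range_subtype] at h1
  set GA := IsFreeGroup.Generators ↥K with hGA
  set GB := IsFreeGroup.Generators ↥L with hGB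
  set ι : GA ⊕ GB → F := Sum.elim (fun a => ((IsFreeGroup.of a : ↥K) : F))
    (fun b => ((IsFreeGroup.of b : ↥L) : F)) with hι
  set eval : (GA ⊕ GB) × Bool → F := fun l => if l.2 then ι l.1 else (ι l.1)⁻¹ with heval
  -- every element of F is a product of letters
  have hword : ∀ x : F, ∃ u : List ((GA ⊕ GB) × Bool), (u.map eval).prod = x := by
    intro x
    have hx : x ∈ Subgroup.closure (Set.range eval) := by
      have hcl : Subgroup.closure (Set.range eval) = ⊤ := by
        rw [eq_top_iff, ← hKL, sup_le_iff]
        constructor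
        · rw [← Subgroup.range_subtype K, MonoidHom.range_eq_map,
            ← isFreeGroup_closure_range_of ↥K, MonoidHom.map_closure]
          refine (Subgroup.closure_le _).mpr ?_
          rintro y ⟨-, ⟨a, rfl⟩, rfl⟩
          exact Subgroup.subset_closure ⟨(Sum.inl a, true), by simp [heval, hι]⟩
        · rw [← Subgroup.range_subtype L, MonoidHom.range_eq_map,
            ← isFreeGroup_closure_range_of ↥L, MonoidHom.map_closure]
          refine (Subgroup.closure_le _).mpr ?_
          rintro y ⟨-, ⟨b, rfl⟩, rfl⟩
          exact Subgroup.subset_closure ⟨(Sum.inr b, true), by simp [heval, hι]⟩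
      rw [hcl]; trivial
    refine Subgroup.closure_induction ?_ ?_ ?_ ?_ hx
    · rintro y ⟨l, rfl⟩; exact ⟨[l], by simp⟩
    · exact ⟨[], by simp⟩
    · rintro y z - - ⟨uy, rfl⟩ ⟨uz, rfl⟩; exact ⟨uy ++ uz, by simp⟩
    · rintro y - ⟨u, rfl⟩
      refine ⟨(u.reverse).map (fun l => (l.1, !l.2)), ?_⟩
      have hinv : ∀ l : (GA ⊕ GB) × Bool, eval (l.1, !l.2) = (eval l)⁻¹ := by
        rintro ⟨i, s⟩
        cases s <;> simp [heval]
      rw [List.map_map, List.map_reverse]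
      have : (List.map (eval ∘ fun l => (l.1, !l.2)) u) = List.map (fun x => x⁻¹) (u.map eval) := by
        rw [List.map_map]
        exact List.map_congr_left fun l _ => hinv l
      rw [this, ← List.prod_inv_reverse]
  choose w hw using hword
  set x0 : F ⧸ H := ((1 : F) : F ⧸ H) with hx0
  set sufs : List ((GA ⊕ GB) × Bool) → Set (F ⧸ H) :=
    fun u => Set.range (fun n : ℕ => (((u.drop n).map eval).prod) • x0) with hsufs
  set Y : Set (F ⧸ H) := (⋃ h ∈ (T : Set F), sufs (w h)) ∪ sufs (w f⁻¹) with hY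
  have hsufsfin : ∀ u, (sufs u).Finite := by
    intro u
    have hsub : sufs u ⊆ (fun n : ℕ => (((u.drop n).map eval).prod) • x0) '' (Set.Iic u.length) := by
      rintro y ⟨n, rfl⟩
      by_cases h : n ≤ u.length
      · exact ⟨n, Set.mem_Iic.mpr h, rfl⟩
      · refine ⟨u.length, Set.mem_Iic.mpr le_rfl, ?_⟩
        show (((u.drop u.length).map eval).prod) • x0 = (((u.drop n).map eval).prod) • x0
        rw [List.drop_length, List.drop_eq_nil_of_le (le_of_not_ge h)]
    exact ((Set.finite_Iic _).image _).subset hsub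
  have hYfin : Y.Finite :=
    Set.Finite.union (Set.Finite.biUnion T.finite_toSet fun h _ => hsufsfin _) (hsufsfin _)
  haveI : Finite ↥Y := hYfin.to_subtype
  have hx0mem : ∀ u, x0 ∈ sufs u := fun u => ⟨u.length, by simp [List.drop_length]⟩
  have hY0 : x0 ∈ Y := Or.inr (hx0mem _)
  -- blocks: K-orbits
  set blk : (F ⧸ H) → Set (F ⧸ H) := fun y => {z | ∃ k ∈ K, k • y = z} with hblk
  have hblk_smul : ∀ k ∈ K, ∀ y, blk (k • y) = blk y := by
    intro k hk y
    ext z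
    constructor
    · rintro ⟨k', hk', rfl⟩
      exact ⟨k' * k, mul_mem hk' hk, by rw [mul_smul]⟩
    · rintro ⟨k', hk', rfl⟩
      exact ⟨k' * k⁻¹, mul_mem hk' (inv_mem hk), by rw [mul_smul, inv_smul_smul]⟩
  have hblk_self : ∀ y, y ∈ blk y := fun y => ⟨1, one_mem K, one_smul F y⟩
  -- permutations for the letters
  have hexK := fun a : GA => exists_perm_extend Y hYfin
    (fun y => ((IsFreeGroup.of a : ↥K) : F) • y) (MulAction.injective _) blk
    (fun y => hblk_smul _ (IsFreeGroup.of a : ↥K).2 y)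
  choose πK hπK hπKb using hexK
  have hexL := fun b : GB => exists_perm_extend Y hYfin
    (fun y => ((IsFreeGroup.of b : ↥L) : F) • y) (MulAction.injective _)
    (fun _ => (0 : ℕ)) (fun _ => rfl)
  choose πL hπL _hπLb using hexL
  -- block-preserving permutations form a subgroup
  set BP : Subgroup (Equiv.Perm ↥Y) :=
    { carrier := {π : Equiv.Perm ↥Y | ∀ y : ↥Y, blk ↑(π y) = blk ↑y}
      one_mem' := fun _ => rfl
      mul_mem' := by
        intro π σ hπ hσ y
        rw [Equiv.Perm.mul_apply, hπ, hσ]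
      inv_mem' := by
        intro π hπ y
        have h := hπ (π⁻¹ y)
        rw [show π (π⁻¹ y) = y from π.apply_symm_apply y] at h
        exact h.symm } with hBP
  set α : ↥K →* Equiv.Perm ↥Y :=
    BP.subtype.comp (IsFreeGroup.lift (fun a => (⟨πK a, hπKb a⟩ : ↥BP))) with hα
  set β : ↥L →* Equiv.Perm ↥Y := IsFreeGroup.lift πL with hβ
  set Φ : F →* Equiv.Perm ↥Y := (Monoid.Coprod.lift α β).comp e.symm.toMonoidHom with hΦ
  have hΦK : ∀ k : ↥K, Φ ↑k = α k := by
    intro k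
    have h1 : e (Monoid.Coprod.inl k) = ↑k := by
      rw [he, MulEquiv.ofBijective_apply, Monoid.Coprod.lift_apply_inl, Subgroup.coe_subtype]
    have h2 : e.symm ↑k = Monoid.Coprod.inl k := by rw [← h1, MulEquiv.symm_apply_apply]
    show (Monoid.Coprod.lift α β) (e.symm ↑k) = α k
    rw [h2, Monoid.Coprod.lift_apply_inl]
  have hΦL : ∀ l : ↥L, Φ ↑l = β l := by
    intro l
    have h1 : e (Monoid.Coprod.inr l) = ↑l := by
      rw [he, MulEquiv.ofBijective_apply, Monoid.Coprod.lift_apply_inr, Subgroup.coe_subtype]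
    have h2 : e.symm ↑l = Monoid.Coprod.inr l := by rw [← h1, MulEquiv.symm_apply_apply]
    show (Monoid.Coprod.lift α β) (e.symm ↑l) = β l
    rw [h2, Monoid.Coprod.lift_apply_inr]
  have hΦblk : ∀ k, k ∈ K → ∀ yv : ↥Y, blk ↑(Φ k yv) = blk ↑yv := by
    intro k hk yv
    have h1 : Φ k = α ⟨k, hk⟩ := hΦK ⟨k, hk⟩
    rw [h1, hα]
    exact (IsFreeGroup.lift (fun a => (⟨πK a, hπKb a⟩ : ↥BP)) ⟨k, hk⟩).2 yv
  -- the basic letter permutations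
  set σ : GA ⊕ GB → Equiv.Perm ↥Y := Sum.elim πK πL with hσdef
  have hΦι : ∀ i, Φ (ι i) = σ i := by
    rintro (a | b)
    · have h1 : Φ (ι (Sum.inl a)) = α (IsFreeGroup.of a) := hΦK _
      rw [h1, hα]
      show BP.subtype (IsFreeGroup.lift (fun a => (⟨πK a, hπKb a⟩ : ↥BP)) (IsFreeGroup.of a)) = _
      rw [IsFreeGroup.lift_of]
      rfl
    · have h1 : Φ (ι (Sum.inr b)) = β (IsFreeGroup.of b) := hΦL _
      rw [h1, hβ, IsFreeGroup.lift_of]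
      rfl
  have hσact : ∀ (i : GA ⊕ GB) (yv : ↥Y), ι i • (↑yv : F ⧸ H) ∈ Y →
      (↑(σ i yv) : F ⧸ H) = ι i • ↑yv := by
    rintro (a | b) yv h
    · show (↑((πK a) yv) : F ⧸ H) = ι (Sum.inl a) • ↑yv
      rw [hπK a yv h]
      rfl
    · show (↑((πL b) yv) : F ⧸ H) = ι (Sum.inr b) • ↑yv
      rw [hπL b yv h]
      rfl
  have hletter : ∀ (l : (GA ⊕ GB) × Bool) (yv : ↥Y), eval l • (↑yv : F ⧸ H) ∈ Y →
      (↑(Φ (eval l) yv) : F ⧸ H) = eval l • ↑yv := by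
    rintro ⟨i, s⟩ yv h
    cases s
    · -- inverse letter
      have hev : eval (i, false) = (ι i)⁻¹ := by simp [heval]
      rw [hev] at h ⊢
      rw [map_inv, hΦι]
      have hmem : ι i • ((ι i)⁻¹ • (↑yv : F ⧸ H)) ∈ Y := by
        rw [smul_inv_smul]; exact yv.2
      have h2 : σ i (⟨(ι i)⁻¹ • ↑yv, h⟩ : ↥Y) = yv := by
        apply Subtype.ext
        rw [hσact i ⟨(ι i)⁻¹ • ↑yv, h⟩ hmem]
        exact smul_inv_smul _ _
      have h3 : (σ i)⁻¹ yv = ⟨(ι i)⁻¹ • ↑yv, h⟩ := by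
        apply (σ i).injective
        rw [h2]
        exact Equiv.apply_symm_apply _ _
      rw [h3]
    · have hev : eval (i, true) = ι i := by simp [heval]
      rw [hev] at h ⊢
      rw [hΦι]
      exact hσact i yv h
  have hY0' : (⟨x0, hY0⟩ : ↥Y) = ⟨x0, hY0⟩ := rfl
  have htrack : ∀ (u : List ((GA ⊕ GB) × Bool)),
      (∀ n : ℕ, (((u.drop n).map eval).prod) • x0 ∈ Y) →
      (↑(Φ ((u.map eval).prod) ⟨x0, hY0⟩) : F ⧸ H) = ((u.map eval).prod) • x0 := by
    intro u
    induction u with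
    | nil =>
      intro _
      simp
    | cons l u ih =>
      intro hu
      have hu' : ∀ n : ℕ, (((u.drop n).map eval).prod) • x0 ∈ Y := fun n => hu (n + 1)
      have h1 := ih hu'
      have hmem : eval l • (((u.map eval).prod) • x0) ∈ Y := by
        have h0 := hu 0
        rwa [List.drop_zero, List.map_cons, List.prod_cons, mul_smul] at h0
      rw [List.map_cons, List.prod_cons, map_mul, Equiv.Perm.mul_apply]
      have hyv : (↑(Φ ((u.map eval).prod) ⟨x0, hY0⟩) : F ⧸ H) = ((u.map eval).prod) • x0 := h1
      have hmem' : eval l • (↑(Φ ((u.map eval).prod) ⟨x0, hY0⟩) : F ⧸ H) ∈ Y := by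
        rw [hyv]; exact hmem
      rw [hletter l _ hmem', hyv, mul_smul]
  -- the finite-index subgroup
  set M : Subgroup F :=
    Subgroup.comap Φ (MulAction.stabilizer (Equiv.Perm ↥Y) (⟨x0, hY0⟩ : ↥Y)) with hM
  have hMmem : ∀ m : F, m ∈ M ↔ Φ m ⟨x0, hY0⟩ = ⟨x0, hY0⟩ := by
    intro m
    rw [hM, Subgroup.mem_comap, MulAction.mem_stabilizer_iff]
    rfl
  have hker : Φ.ker ≤ M := by
    intro g hg
    rw [MonoidHom.mem_ker] at hg
    rw [hMmem, hg]
    rfl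
  haveI hkerfi : Φ.ker.FiniteIndex := by
    constructor
    rw [Subgroup.index_ker]
    exact Nat.card_pos.ne'
  have hMfin : M.FiniteIndex := Subgroup.finiteIndex_of_le hker
  have hHM : H ≤ M := by
    rw [← hT, Subgroup.closure_le]
    intro h hh
    have hhH : h ∈ H := by rw [← hT]; exact Subgroup.subset_closure hh
    have hmem : ∀ n : ℕ, ((((w h).drop n).map eval).prod) • x0 ∈ Y := by
      intro n
      rw [hY]
      exact Or.inl (Set.mem_biUnion hh ⟨n, rfl⟩)
    have h3 := htrack (w h) hmem
    rw [hw h] at h3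
    show h ∈ M
    rw [hMmem]
    apply Subtype.ext
    rw [h3]
    show h • ((1 : F) : F ⧸ H) = ((1 : F) : F ⧸ H)
    rw [MulAction.Quotient.smul_coe, QuotientGroup.eq]
    simpa [smul_eq_mul] using inv_mem hhH
  have hfmem : ∀ n : ℕ, ((((w f⁻¹).drop n).map eval).prod) • x0 ∈ Y := by
    intro n
    rw [hY]
    exact Or.inr ⟨n, rfl⟩
  have key : f ∉ {x : F | ∃ m ∈ M, ∃ k ∈ K, x = m * k} := by
    rintro ⟨m, hm, k, hk, rfl⟩
    have h1 := htrack (w (m * k)⁻¹) hfmem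
    rw [hw ((m * k)⁻¹)] at h1
    have hm' : Φ m ⟨x0, hY0⟩ = ⟨x0, hY0⟩ := (hMmem m).mp hm
    have hminv : Φ m⁻¹ (⟨x0, hY0⟩ : ↥Y) = ⟨x0, hY0⟩ := by
      rw [map_inv]
      conv_lhs => rw [← hm']
      exact Equiv.symm_apply_apply _ _
    have h2 : Φ ((m * k)⁻¹) (⟨x0, hY0⟩ : ↥Y) = Φ k⁻¹ ⟨x0, hY0⟩ := by
      rw [mul_inv_rev, map_mul, Equiv.Perm.mul_apply, hminv]
    have h3 : blk ((m * k)⁻¹ • x0) = blk x0 := by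
      rw [← h1, h2]
      exact hΦblk k⁻¹ (inv_mem hk) _
    have h4 : x0 ∈ blk ((m * k)⁻¹ • x0) := by
      rw [h3]; exact hblk_self x0
    obtain ⟨k', hk', hk'e⟩ := h4
    rw [← mul_smul] at hk'e
    rw [hx0, MulAction.Quotient.smul_coe, QuotientGroup.eq] at hk'e
    apply hf
    refine ⟨(m * k) * k'⁻¹, ?_, k', hk', by group⟩
    have heq : ((k' * (m * k)⁻¹) • (1 : F))⁻¹ * 1 = (m * k) * k'⁻¹ := by
      rw [smul_eq_mul]; group
    rwa [heq] at hk'e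
  refine ⟨M, hMfin, hHM, ?_, key⟩
  rintro m hm ⟨h, hh, k, hk, heq⟩
  exact key ⟨m⁻¹ * h, mul_mem (inv_mem hm) (hHM hh), k, hk, by
    rw [mul_assoc, ← heq, inv_mul_cancel_left]⟩
end

section
/- Let F be the free group on two generators. There exist a subset B of F that is closed in the profinite topology of F and a finitely generated subgroup K of F such that the product set BK = { bk : b ∈ B, k ∈ K } is not closed in the profinite topology of F. -/
noncomputable def expA : FreeGroup (Fin 2) →* Multiplicative ℤ :=
  FreeGroup.lift (fun i => Multiplicative.ofAdd (if i = 0 then 1 else 0))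

noncomputable def expB : FreeGroup (Fin 2) →* Multiplicative ℤ :=
  FreeGroup.lift (fun i => Multiplicative.ofAdd (if i = 1 then 1 else 0))

noncomputable def sa (x : FreeGroup (Fin 2)) : ℤ := Multiplicative.toAdd (expA x)
noncomputable def sb (x : FreeGroup (Fin 2)) : ℤ := Multiplicative.toAdd (expB x)

@[simp] lemma sa_mul (x y : FreeGroup (Fin 2)) : sa (x * y) = sa x + sa y := by
  simp [sa, map_mul]

@[simp] lemma sb_mul (x y : FreeGroup (Fin 2)) : sb (x * y) = sb x + sb y := by
  simp [sb, map_mul]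

@[simp] lemma sa_zpow (x : FreeGroup (Fin 2)) (m : ℤ) : sa (x ^ m) = m * sa x := by
  simp [sa, map_zpow, toAdd_zpow]

@[simp] lemma sb_zpow (x : FreeGroup (Fin 2)) (m : ℤ) : sb (x ^ m) = m * sb x := by
  simp [sb, map_zpow, toAdd_zpow]

@[simp] lemma sa_pow (x : FreeGroup (Fin 2)) (m : ℕ) : sa (x ^ m) = m * sa x := by
  simp [sa, map_pow, toAdd_pow]

@[simp] lemma sa_inv (x : FreeGroup (Fin 2)) : sa x⁻¹ = - sa x := by
  simp [sa, map_inv, toAdd_inv]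

@[simp] lemma sa_a : sa (FreeGroup.of (0 : Fin 2)) = 1 := by
  simp [sa, expA]

@[simp] lemma sb_a : sb (FreeGroup.of (0 : Fin 2)) = 0 := by
  simp [sb, expB]

@[simp] lemma sa_b : sa (FreeGroup.of (1 : Fin 2)) = 0 := by
  simp [sa, expA]

@[simp] lemma sb_b : sb (FreeGroup.of (1 : Fin 2)) = 1 := by
  simp [sb, expB]

noncomputable def psiA (e : ℕ) : FreeGroup (Fin 2) →* Multiplicative (ZMod e) :=
  (AddMonoidHom.toMultiplicative (Int.castAddHom (ZMod e))).comp expA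

noncomputable def psiB (e : ℕ) : FreeGroup (Fin 2) →* Multiplicative (ZMod e) :=
  (AddMonoidHom.toMultiplicative (Int.castAddHom (ZMod e))).comp expB

lemma mem_ker_psiA {e : ℕ} {x : FreeGroup (Fin 2)} (hx : x ∈ (psiA e).ker) :
    (e : ℤ) ∣ sa x := by
  rw [MonoidHom.mem_ker] at hx
  have : ((sa x : ZMod e)) = 0 := by
    have := congrArg Multiplicative.toAdd hx
    simpa [psiA, sa] using this
  exact (ZMod.intCast_zmod_eq_zero_iff_dvd _ _).1 this

lemma mem_ker_psiB {e : ℕ} {x : FreeGroup (Fin 2)} (hx : x ∈ (psiB e).ker) :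
    (e : ℤ) ∣ sb x := by
  rw [MonoidHom.mem_ker] at hx
  have : ((sb x : ZMod e)) = 0 := by
    have := congrArg Multiplicative.toAdd hx
    simpa [psiB, sb] using this
  exact (ZMod.intCast_zmod_eq_zero_iff_dvd _ _).1 this


lemma keyNT (p q : ℤ) (h : ¬ ∃ n : ℕ, p = (n : ℤ) ∧ q = 2 ^ n) :
    ∃ e : ℕ, e ≠ 0 ∧ ∀ n : ℕ, ¬ ((e : ℤ) ∣ ((n : ℤ) - p) ∧ (e : ℤ) ∣ (2 ^ n - q)) := by
  by_cases hq : q = 0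
  · refine ⟨3, by norm_num, fun n ⟨_, h2⟩ => ?_⟩
    rw [hq, sub_zero] at h2
    have h3 : Prime (3 : ℤ) := by norm_num
    have : (3 : ℤ) ∣ 2 := h3.dvd_of_dvd_pow h2
    norm_num at this
  · set T : ℕ := p.natAbs + q.natAbs + 2 with hT
    refine ⟨2 ^ (T + 1), by positivity, fun n ⟨h1, h2⟩ => ?_⟩
    push_cast at h1 h2
    have hTlt : (T : ℤ) < 2 ^ T := by exact_mod_cast Nat.lt_two_pow_self (n := T)
    have h2S : (2 : ℤ) ^ (T + 1) = 2 ^ T * 2 := pow_succ 2 T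
    have hq_lt : |q| < (T : ℤ) := by
      rw [Int.abs_eq_natAbs]
      have : q.natAbs < T := by omega
      exact_mod_cast this
    have hp_le : |p| ≤ (T : ℤ) := by
      rw [Int.abs_eq_natAbs]
      have : p.natAbs ≤ T := by omega
      exact_mod_cast this
    by_cases hn : T + 1 ≤ n
    · have hd : (2 : ℤ) ^ (T + 1) ∣ q := by
        have hdn : (2 : ℤ) ^ (T + 1) ∣ 2 ^ n := pow_dvd_pow 2 hn
        have := dvd_sub hdn h2
        simpa using this
      have hle : (2 : ℤ) ^ (T + 1) ≤ |q| := Int.le_of_dvd (abs_pos.2 hq) ((dvd_abs _ _).2 hd)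
      have hpos : (0:ℤ) < 2 ^ T := by positivity
      linarith
    · push_neg at hn
      have hn' : (n : ℤ) ≤ T := by exact_mod_cast Nat.lt_succ_iff.1 hn
      have hnn : (0:ℤ) ≤ (n:ℤ) := Int.natCast_nonneg n
      have hnp : (n : ℤ) = p := by
        have habs : |(n : ℤ) - p| < (2 : ℤ) ^ (T + 1) := by
          have h5 : |(n : ℤ) - p| ≤ |(n:ℤ)| + |p| := abs_sub _ _
          have h6 : |(n:ℤ)| = (n:ℤ) := abs_of_nonneg hnn
          linarith
        have := Int.eq_zero_of_abs_lt_dvd h1 habs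
        omega
      have hq2 : q ≠ 2 ^ n := fun hc => h ⟨n, hnp.symm, hc⟩
      have habs2 : |(2:ℤ) ^ n - q| < (2 : ℤ) ^ (T + 1) := by
        have e1 : (2:ℤ) ^ n ≤ 2 ^ T := pow_le_pow_right₀ (by norm_num) (by omega)
        have h5 : |(2:ℤ)^n - q| ≤ |(2:ℤ)^n| + |q| := abs_sub _ _
        have h6 : |(2:ℤ)^n| = 2^n := abs_of_nonneg (by positivity)
        linarith
      have := Int.eq_zero_of_abs_lt_dvd h2 habs2
      omega

theorem exists_closed_set_times_fg_subgroup_not_closed :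
    ∃ (B : Set (FreeGroup (Fin 2))) (K : Subgroup (FreeGroup (Fin 2))),
      ProfinitelyClosed B ∧ K.FG ∧
      ¬ ProfinitelyClosed {x : FreeGroup (Fin 2) | ∃ b ∈ B, ∃ k ∈ K, x = b * k} := by
  set bb : FreeGroup (Fin 2) := FreeGroup.of 1 with hbb
  set aa : FreeGroup (Fin 2) := FreeGroup.of 0 with haa
  refine ⟨{x | ∃ n : ℕ, sa x = (n : ℤ) ∧ sb x = 2 ^ n}, Subgroup.zpowers bb, ?_, ?_, ?_⟩
  · -- B is profinitely closed
    intro f hf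
    have hf' : ¬ ∃ n : ℕ, sa f = (n : ℤ) ∧ sb f = 2 ^ n := hf
    obtain ⟨e, he, hkey⟩ := keyNT (sa f) (sb f) hf'
    haveI : NeZero e := ⟨he⟩
    refine ⟨(psiA e).ker ⊓ (psiB e).ker, ?_, ?_, ?_⟩
    · constructor
      intro x hx g
      exact ⟨((psiA e).normal_ker).conj_mem x hx.1 g, ((psiB e).normal_ker).conj_mem x hx.2 g⟩
    · haveI : Subgroup.FiniteIndex (psiA e).ker := Subgroup.finiteIndex_ker _
      haveI : Subgroup.FiniteIndex (psiB e).ker := Subgroup.finiteIndex_ker _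
      infer_instance
    · rintro n ⟨hnA, hnB⟩ ⟨m, hm1, hm2⟩
      have d1 : (e : ℤ) ∣ sa n := mem_ker_psiA hnA
      have d2 : (e : ℤ) ∣ sb n := mem_ker_psiB hnB
      refine hkey m ⟨?_, ?_⟩
      · have : sa f + sa n = (m : ℤ) := by rw [← sa_mul]; exact hm1
        have : (m : ℤ) - sa f = sa n := by omega
        rwa [this]
      · have : sb f + sb n = 2 ^ m := by rw [← sb_mul]; exact hm2
        have : (2:ℤ) ^ m - sb f = sb n := by omega
        rwa [this]
  · -- K is finitely generated
    rw [Subgroup.zpowers_eq_closure]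
    exact (Subgroup.fg_iff _).2 ⟨{bb}, rfl, Set.finite_singleton _⟩
  · -- BK is not profinitely closed
    intro hcl
    have key : ∀ x : FreeGroup (Fin 2),
        (x ∈ {x : FreeGroup (Fin 2) | ∃ b ∈ {x | ∃ n : ℕ, sa x = (n : ℤ) ∧ sb x = 2 ^ n},
          ∃ k ∈ Subgroup.zpowers bb, x = b * k}) ↔ 0 ≤ sa x := by
      intro x
      constructor
      · rintro ⟨b, ⟨n, hb1, hb2⟩, k, ⟨m, hk⟩, rfl⟩
        rw [sa_mul, hb1, ← hk, sa_zpow]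
        have : sa bb = 0 := sb_a ▸ sa_b
        rw [hbb] at this ⊢
        rw [this, mul_zero, add_zero]
        positivity
      · intro hx
        set n : ℕ := (sa x).toNat with hn
        have hsan : sa x = (n : ℤ) := (Int.toNat_of_nonneg hx).symm
        refine ⟨x * bb ^ ((2:ℤ) ^ n - sb x), ⟨n, ?_, ?_⟩, bb ^ (sb x - (2:ℤ) ^ n),
          ⟨sb x - 2 ^ n, rfl⟩, ?_⟩
        · rw [sa_mul, sa_zpow, hbb, sa_b, mul_zero, add_zero, hsan]
        · rw [sb_mul, sb_zpow, hbb, sb_b, mul_one]; ring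
        · rw [mul_assoc, ← zpow_add]
          norm_num
      -- end of key
    have hnot : (aa⁻¹) ∉ {x : FreeGroup (Fin 2) | ∃ b ∈ {x | ∃ n : ℕ, sa x = (n : ℤ) ∧ sb x = 2 ^ n},
          ∃ k ∈ Subgroup.zpowers bb, x = b * k} := by
      rw [key]
      rw [haa, sa_inv, sa_a]
      norm_num
    obtain ⟨N, hN1, hN2, hN3⟩ := hcl (aa⁻¹) hnot
    haveI := hN1; haveI := hN2
    refine hN3 (aa ^ N.index) (Subgroup.pow_index_mem N aa) ?_
    rw [key]
    rw [sa_mul, haa, sa_inv, sa_a, sa_pow, sa_a, mul_one]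
    have : N.index ≠ 0 := hN2.index_ne_zero
    omega
end
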